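/- arXiv:2005.08861 — 4 statements merged into one kernel-verified Lean document; each statement's English description precedes it below -/
import Mathlib

section
/- Uniqueness for the diauxic-growth system: if x, y : [0,T] → ℝ⁵ are two solutions of the ODE x' = F(x) taking values in the closed nonnegative orthant [0,∞)⁵ and satisfying x(0) = y(0), then x(t) = y(t) for all t ∈ [0,T]. -/
open Set

noncomputable def mu (m κ lam r a : ℝ) : ℝ := m * (r / (κ + r)) * (lam / (lam + a))

noncomputable def mu3 (m3 κ3 lam a : ℝ) : ℝ := m3 * (a / (κ3 + a)) * (lam / (lam + a))

noncomputable def eta1 (e1 k1 ki r1 r2 : ℝ) : ℝ := e1 * (r2 / (k1 + r2)) * (ki / (ki + r1))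

noncomputable def eta2 (e2 k2 r1 : ℝ) : ℝ := e2 * (r1 / (k2 + r1))

/-- Division rate `b_j = μ_j + μ3`. -/
noncomputable def bdiv (m κ m3 κ3 lam r a : ℝ) : ℝ := mu m κ lam r a + mu3 m3 κ3 lam a

/-- The diauxic-growth vector field `F` on `ℝ⁵`, with coordinates `(n1, n2, r1, r2, a)`. -/
noncomputable def F (m1 m2 m3 κ1 κ2 κ3 lam e1 e2 k1 k2 ki q1 q2 q3 θ1 θ2 V : ℝ)
    (x : Fin 5 → ℝ) : Fin 5 → ℝ :=
  ![ (bdiv m1 κ1 m3 κ3 lam (x 2) (x 4) - eta1 e1 k1 ki (x 2) (x 3)) * x 0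
       + eta2 e2 k2 (x 2) * x 1,
     (bdiv m2 κ2 m3 κ3 lam (x 3) (x 4) - eta2 e2 k2 (x 2)) * x 1
       + eta1 e1 k1 ki (x 2) (x 3) * x 0,
     -(mu m1 κ1 lam (x 2) (x 4) * x 0) / (q1 * V),
     -(mu m2 κ2 lam (x 3) (x 4) * x 1) / (q2 * V),
     -(mu3 m3 κ3 lam (x 4) * (x 0 + x 1)) / (q3 * V)
       + (θ1 * mu m1 κ1 lam (x 2) (x 4) * x 0 + θ2 * mu m2 κ2 lam (x 3) (x 4) * x 1) / V ]

/-- The open set `U` on which `F` is locally Lipschitz. -/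
def U (κ1 κ2 κ3 lam k1 k2 ki : ℝ) : Set (Fin 5 → ℝ) :=
  {x : Fin 5 → ℝ | -min (min κ1 ki) k2 < x 2 ∧ -min κ2 k1 < x 3 ∧ -min κ3 lam < x 4}

theorem contDiffOn_F (m1 m2 m3 κ1 κ2 κ3 lam e1 e2 k1 k2 ki q1 q2 q3 θ1 θ2 V : ℝ) :
    ContDiffOn ℝ 1 (F m1 m2 m3 κ1 κ2 κ3 lam e1 e2 k1 k2 ki q1 q2 q3 θ1 θ2 V)
      (U κ1 κ2 κ3 lam k1 k2 ki) := by
  set s := U κ1 κ2 κ3 lam k1 k2 ki with hs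
  have h0 : ContDiffOn ℝ 1 (fun x : Fin 5 → ℝ => x 0) s := (contDiff_apply ℝ ℝ 0).contDiffOn
  have h1 : ContDiffOn ℝ 1 (fun x : Fin 5 → ℝ => x 1) s := (contDiff_apply ℝ ℝ 1).contDiffOn
  have h2 : ContDiffOn ℝ 1 (fun x : Fin 5 → ℝ => x 2) s := (contDiff_apply ℝ ℝ 2).contDiffOn
  have h3 : ContDiffOn ℝ 1 (fun x : Fin 5 → ℝ => x 3) s := (contDiff_apply ℝ ℝ 3).contDiffOn
  have h4 : ContDiffOn ℝ 1 (fun x : Fin 5 → ℝ => x 4) s := (contDiff_apply ℝ ℝ 4).contDiffOn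
  have d1 : ∀ x ∈ s, κ1 + x 2 ≠ 0 := by
    intro x hx
    have h := hx.1
    have := min_le_left (min κ1 ki) k2
    have := min_le_left κ1 ki
    nlinarith
  have d2 : ∀ x ∈ s, ki + x 2 ≠ 0 := by
    intro x hx
    have h := hx.1
    have := min_le_left (min κ1 ki) k2
    have := min_le_right κ1 ki
    nlinarith
  have d3 : ∀ x ∈ s, k2 + x 2 ≠ 0 := by
    intro x hx
    have h := hx.1
    have := min_le_right (min κ1 ki) k2
    nlinarith
  have d4 : ∀ x ∈ s, κ2 + x 3 ≠ 0 := by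
    intro x hx
    have h := hx.2.1
    have := min_le_left κ2 k1
    nlinarith
  have d5 : ∀ x ∈ s, k1 + x 3 ≠ 0 := by
    intro x hx
    have h := hx.2.1
    have := min_le_right κ2 k1
    nlinarith
  have d6 : ∀ x ∈ s, κ3 + x 4 ≠ 0 := by
    intro x hx
    have h := hx.2.2
    have := min_le_left κ3 lam
    nlinarith
  have d7 : ∀ x ∈ s, lam + x 4 ≠ 0 := by
    intro x hx
    have h := hx.2.2
    have := min_le_right κ3 lam
    nlinarith
  have hmu1 : ContDiffOn ℝ 1 (fun x : Fin 5 → ℝ => mu m1 κ1 lam (x 2) (x 4)) s := by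
    unfold mu
    exact (contDiffOn_const.mul (h2.div (contDiffOn_const.add h2) d1)).mul
      (contDiffOn_const.div (contDiffOn_const.add h4) d7)
  have hmu2 : ContDiffOn ℝ 1 (fun x : Fin 5 → ℝ => mu m2 κ2 lam (x 3) (x 4)) s := by
    unfold mu
    exact (contDiffOn_const.mul (h3.div (contDiffOn_const.add h3) d4)).mul
      (contDiffOn_const.div (contDiffOn_const.add h4) d7)
  have hmu3 : ContDiffOn ℝ 1 (fun x : Fin 5 → ℝ => mu3 m3 κ3 lam (x 4)) s := by
    unfold mu3
    exact (contDiffOn_const.mul (h4.div (contDiffOn_const.add h4) d6)).mul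
      (contDiffOn_const.div (contDiffOn_const.add h4) d7)
  have heta1 : ContDiffOn ℝ 1 (fun x : Fin 5 → ℝ => eta1 e1 k1 ki (x 2) (x 3)) s := by
    unfold eta1
    exact (contDiffOn_const.mul (h3.div (contDiffOn_const.add h3) d5)).mul
      (contDiffOn_const.div (contDiffOn_const.add h2) d2)
  have heta2 : ContDiffOn ℝ 1 (fun x : Fin 5 → ℝ => eta2 e2 k2 (x 2)) s := by
    unfold eta2
    exact contDiffOn_const.mul (h2.div (contDiffOn_const.add h2) d3)
  rw [contDiffOn_pi]
  intro i
  fin_cases i <;>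
    simp only [F, bdiv, Fin.isValue, Matrix.cons_val_zero, Matrix.cons_val_one, Matrix.head_cons,
      Matrix.cons_val_two, Matrix.tail_cons, Matrix.cons_val_three, Matrix.cons_val_four,
      Matrix.head_fin_const, Matrix.cons_val_fin_one]
  · exact (((hmu1.add hmu3).sub heta1).mul h0).add (heta2.mul h1)
  · exact (((hmu2.add hmu3).sub heta2).mul h1).add (heta1.mul h0)
  · exact ((hmu1.mul h0).neg).div_const _
  · exact ((hmu2.mul h1).neg).div_const _
  · exact (((hmu3.mul (h0.add h1)).neg).div_const _).add
      ((((contDiffOn_const.mul hmu1).mul h0).add ((contDiffOn_const.mul hmu2).mul h1)).div_const _)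

/-- uniqueness for the diauxic-growth system. If `x, y : [0,T] → ℝ⁵` are two
solutions of `x' = F(x)` taking values in the closed nonnegative orthant `[0,∞)⁵` with
`x(0) = y(0)`, then `x(t) = y(t)` for all `t ∈ [0,T]`. -/
theorem diauxic_uniqueness
    (m1 m2 m3 κ1 κ2 κ3 lam e1 e2 k1 k2 ki q1 q2 q3 θ1 θ2 V : ℝ)
    (hm1 : 0 < m1) (hm2 : 0 < m2) (hm3 : 0 < m3)
    (hκ1 : 0 < κ1) (hκ2 : 0 < κ2) (hκ3 : 0 < κ3) (hlam : 0 < lam)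
    (he1 : 0 < e1) (he2 : 0 < e2) (hk1 : 0 < k1) (hk2 : 0 < k2) (hki : 0 < ki)
    (hq1 : 0 < q1) (hq2 : 0 < q2) (hq3 : 0 < q3)
    (hθ1 : 0 < θ1) (hθ2 : 0 < θ2) (hV : 0 < V)
    (T : ℝ) (hT : 0 ≤ T) (x y : ℝ → Fin 5 → ℝ)
    (hx : ∀ t ∈ Icc (0 : ℝ) T,
      HasDerivWithinAt x (F m1 m2 m3 κ1 κ2 κ3 lam e1 e2 k1 k2 ki q1 q2 q3 θ1 θ2 V (x t))
        (Icc (0 : ℝ) T) t)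
    (hy : ∀ t ∈ Icc (0 : ℝ) T,
      HasDerivWithinAt y (F m1 m2 m3 κ1 κ2 κ3 lam e1 e2 k1 k2 ki q1 q2 q3 θ1 θ2 V (y t))
        (Icc (0 : ℝ) T) t)
    (hxpos : ∀ t ∈ Icc (0 : ℝ) T, ∀ i, 0 ≤ x t i)
    (hypos : ∀ t ∈ Icc (0 : ℝ) T, ∀ i, 0 ≤ y t i)
    (hinit : x 0 = y 0) :
    ∀ t ∈ Icc (0 : ℝ) T, x t = y t := by
  set Fn := F m1 m2 m3 κ1 κ2 κ3 lam e1 e2 k1 k2 ki q1 q2 q3 θ1 θ2 V with hFn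
  set Us : Set (Fin 5 → ℝ) := U κ1 κ2 κ3 lam k1 k2 ki with hUs
  have hF : ContDiffOn ℝ 1 Fn Us := contDiffOn_F m1 m2 m3 κ1 κ2 κ3 lam e1 e2 k1 k2 ki q1 q2 q3 θ1 θ2 V
  have hUopen : IsOpen Us := by
    have hq : Us = (fun z : Fin 5 → ℝ => z 2) ⁻¹' Ioi (-min (min κ1 ki) k2) ∩
        ((fun z : Fin 5 → ℝ => z 3) ⁻¹' Ioi (-min κ2 k1) ∩
         (fun z : Fin 5 → ℝ => z 4) ⁻¹' Ioi (-min κ3 lam)) := by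
      ext z; simp [hUs, U, mem_setOf_eq, and_assoc]
    rw [hq]
    exact ((isOpen_Ioi.preimage (continuous_apply 2)).inter
      ((isOpen_Ioi.preimage (continuous_apply 3)).inter (isOpen_Ioi.preimage (continuous_apply 4))))
  have hxc : ContinuousOn x (Icc 0 T) := fun t ht => (hx t ht).continuousWithinAt
  have hyc : ContinuousOn y (Icc 0 T) := fun t ht => (hy t ht).continuousWithinAt
  have hKc : IsCompact (x '' Icc 0 T ∪ y '' Icc 0 T) :=
    (isCompact_Icc.image_of_continuousOn hxc).union (isCompact_Icc.image_of_continuousOn hyc)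
  obtain ⟨R, hR⟩ := hKc.isBounded.subset_closedBall 0
  set s : Set (Fin 5 → ℝ) := {z | ∀ i, 0 ≤ z i} ∩ Metric.closedBall 0 R with hsdef
  have horthc : IsClosed {z : Fin 5 → ℝ | ∀ i, 0 ≤ z i} := by
    have hq : {z : Fin 5 → ℝ | ∀ i, 0 ≤ z i} = ⋂ i, (fun z : Fin 5 → ℝ => z i) ⁻¹' Ici 0 := by
      ext z; simp [mem_iInter]
    rw [hq]
    exact isClosed_iInter fun i => isClosed_Ici.preimage (continuous_apply i)
  have hscomp : IsCompact s := (isCompact_closedBall 0 R).inter_left horthc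
  have hsconv : Convex ℝ s := by
    refine Convex.inter ?_ (convex_closedBall 0 R)
    have hq : {z : Fin 5 → ℝ | ∀ i, 0 ≤ z i} = Set.pi univ (fun _ => Ici (0:ℝ)) := by
      ext z; simp [Set.mem_pi, Pi.le_def]
    rw [hq]
    exact convex_pi fun i _ => convex_Ici 0
  have hsU : s ⊆ Us := by
    intro z hz
    have h2 := hz.1 2; have h3 := hz.1 3; have h4 := hz.1 4
    refine ⟨?_, ?_, ?_⟩
    · have := lt_min (lt_min hκ1 hki) hk2; linarith
    · have := lt_min hκ2 hk1; linarith
    · have := lt_min hκ3 hlam; linarith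
  have hdiff : ∀ z ∈ s, DifferentiableAt ℝ Fn z := fun z hz =>
    (hF.contDiffAt (hUopen.mem_nhds (hsU hz))).differentiableAt one_ne_zero
  have hfdc : ContinuousOn (fun z => ‖fderiv ℝ Fn z‖) s := by
    have hq := (hF.continuousOn_fderiv_of_isOpen hUopen le_rfl)
    exact (hq.mono hsU).norm
  obtain ⟨C, hC⟩ := hscomp.exists_bound_of_continuousOn hfdc
  set K : NNReal := ⟨max C 0, le_max_right C 0⟩ with hK
  have hlip : LipschitzOnWith K Fn s := by
    refine hsconv.lipschitzOnWith_of_nnnorm_fderiv_le hdiff ?_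
    intro z hz
    rw [← NNReal.coe_le_coe, coe_nnnorm]
    have hq := hC z hz
    simp only [hK, NNReal.coe_mk, Real.norm_eq_abs, abs_norm] at hq ⊢
    exact le_trans hq (le_max_left C 0)
  have hxs : ∀ t ∈ Ico (0:ℝ) T, x t ∈ s := by
    intro t ht
    have ht' : t ∈ Icc (0:ℝ) T := ⟨ht.1, ht.2.le⟩
    exact ⟨fun i => hxpos t ht' i, hR (Or.inl ⟨t, ht', rfl⟩)⟩
  have hys : ∀ t ∈ Ico (0:ℝ) T, y t ∈ s := by
    intro t ht
    have ht' : t ∈ Icc (0:ℝ) T := ⟨ht.1, ht.2.le⟩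
    exact ⟨fun i => hypos t ht' i, hR (Or.inr ⟨t, ht', rfl⟩)⟩
  have hmem : ∀ t ∈ Ico (0:ℝ) T, Icc (0:ℝ) T ∈ nhdsWithin t (Ici t) := by
    intro t ht
    rw [mem_nhdsWithin]
    exact ⟨Iio T, isOpen_Iio, ht.2, fun u hu => ⟨le_trans ht.1 hu.2, hu.1.le⟩⟩
  have hx' : ∀ t ∈ Ico (0:ℝ) T, HasDerivWithinAt x (Fn (x t)) (Ici t) t := fun t ht =>
    (hx t ⟨ht.1, ht.2.le⟩).mono_of_mem_nhdsWithin (hmem t ht)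
  have hy' : ∀ t ∈ Ico (0:ℝ) T, HasDerivWithinAt y (Fn (y t)) (Ici t) t := fun t ht =>
    (hy t ⟨ht.1, ht.2.le⟩).mono_of_mem_nhdsWithin (hmem t ht)
  exact fun t ht => ODE_solution_unique_of_mem_Icc_right (v := fun _ => Fn) (s := fun _ => s) (fun _ _ => hlip)
    hxc hx' hxs hyc hy' hys hinit ht
end

section
/- Forward invariance of the nonnegative orthant: if x : [0,T] → ℝ⁵ is a solution of the diauxic-growth ODE x' = F(x) with x(0) ∈ [0,∞)⁵ and with trajectory contained in the open set U on which F is defined and locally Lipschitz, then x(t) ∈ [0,∞)⁵ for all t ∈ [0,T]. -/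
open Set Filter Topology

lemma rate_neg_bound (s l c d e r p : ℝ) (hs : 0 < s) (hl : 0 < l) (hc : 0 < c)
    (hd : c ≤ d) (he : c ≤ e) (hp : 0 ≤ p) (hr : -r ≤ p) :
    -(s * (r / d) * (l / e)) ≤ s * l / (c * c) * p := by
  have hd0 : 0 < d := hc.trans_le hd
  have he0 : 0 < e := hc.trans_le he
  have h1 : (-r) / d ≤ p / c := div_le_div₀ hp hr hc hd
  have h2 : l / e ≤ l / c := by gcongr
  have h2' : (0:ℝ) < l / e := div_pos hl he0
  have h3 : (-r) / d * (l / e) ≤ p / c * (l / e) := mul_le_mul_of_nonneg_right h1 h2'.le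
  have h4 : p / c * (l / e) ≤ p / c * (l / c) :=
    mul_le_mul_of_nonneg_left h2 (div_nonneg hp hc.le)
  calc -(s * (r / d) * (l / e)) = s * ((-r) / d * (l / e)) := by ring
    _ ≤ s * (p / c * (l / c)) := by nlinarith
    _ = s * l / (c * c) * p := by ring

lemma rate_pos_bound (s l c d e r p : ℝ) (hs : 0 < s) (hl : 0 < l) (hc : 0 < c)
    (hd : c ≤ d) (he : c ≤ e) (hp : 0 ≤ p) (hr : r ≤ p) :
    s * (r / d) * (l / e) ≤ s * l / (c * c) * p := by
  have h := rate_neg_bound s l c d e (-r) p hs hl hc hd he hp (by linarith)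
  have h2 : -(s * (-r / d) * (l / e)) = s * (r / d) * (l / e) := by ring
  linarith [h2 ▸ h]

lemma rate_nonpos (s l d e r : ℝ) (hs : 0 ≤ s) (hl : 0 ≤ l) (hd : 0 < d) (he : 0 < e)
    (hr : r ≤ 0) : s * (r / d) * (l / e) ≤ 0 := by
  have h1 : r / d ≤ 0 := div_nonpos_of_nonpos_of_nonneg hr hd.le
  have h2 : (0:ℝ) ≤ l / e := div_nonneg hl he.le
  exact mul_nonpos_of_nonpos_of_nonneg (mul_nonpos_of_nonneg_of_nonpos hs h1) h2

lemma cross_bound (s w A B pw M : ℝ) (hsA : -s ≤ A) (hsB : s ≤ B) (hw : -w ≤ pw)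
    (hwM : w ≤ M) (hA : 0 ≤ A) (hB : 0 ≤ B) (hpw : 0 ≤ pw) (hM : 0 ≤ M) :
    -(s * w) ≤ A * M + B * pw := by
  rcases le_total 0 w with h | h
  · have h1 : (-s) * w ≤ A * w := mul_le_mul_of_nonneg_right hsA h
    have h2 : A * w ≤ A * M := mul_le_mul_of_nonneg_left hwM hA
    nlinarith [mul_nonneg hB hpw]
  · rcases le_total s 0 with hs | hs
    · have h1 : s * (-w) ≤ 0 := mul_nonpos_of_nonpos_of_nonneg hs (by linarith)
      nlinarith [mul_nonneg hA hM, mul_nonneg hB hpw]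
    · have h1 : s * (-w) ≤ B * (-w) := mul_le_mul_of_nonneg_right hsB (by linarith)
      have h2 : B * (-w) ≤ B * pw := mul_le_mul_of_nonneg_left hw hB
      nlinarith [mul_nonneg hA hM]

lemma prod_bound (s w pw C : ℝ) (hs : s ≤ 0) (hsC : -s ≤ C) (hw : -w ≤ pw)
    (hpw : 0 ≤ pw) (hC : 0 ≤ C) : s * w ≤ C * pw := by
  rcases le_total 0 w with h | h
  · have h1 : s * w ≤ 0 := mul_nonpos_of_nonpos_of_nonneg hs h
    nlinarith [mul_nonneg hC hpw]
  · have h1 : (-s) * (-w) ≤ C * (-w) := mul_le_mul_of_nonneg_right hsC (by linarith)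
    have h2 : C * (-w) ≤ C * pw := mul_le_mul_of_nonneg_left hw hC
    nlinarith

lemma div_mono_pos {a b c : ℝ} (h : a ≤ b) (hc : 0 < c) : a / c ≤ b / c := by
  have h2 := div_nonneg (sub_nonneg.2 h) hc.le
  rw [sub_div] at h2
  linarith

lemma invariance_aux {n : ℕ} {T : ℝ} (hT : 0 ≤ T) (x : ℝ → Fin n → ℝ) (v : ℝ → Fin n → ℝ)
    (hcont : ∀ i, ContinuousOn (fun t => x t i) (Icc 0 T))
    (hder : ∀ t ∈ Ico (0:ℝ) T, ∀ i,
      Tendsto (fun z => (z - t)⁻¹ * (x z i - x t i)) (𝓝[>] t) (𝓝 (v t i)))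
    (K : ℝ) (hK : 0 ≤ K)
    (hbound : ∀ t ∈ Ico (0:ℝ) T, ∀ i, x t i ≤ 0 →
      -(v t i) ≤ K * ∑ j, max (-(x t j)) 0)
    (hx0 : ∀ i, 0 ≤ x 0 i) :
    ∀ t ∈ Icc (0:ℝ) T, ∀ i, 0 ≤ x t i := by
  classical
  set f : ℝ → ℝ := fun t => ∑ j, max (-(x t j)) 0 with hf
  have hfnn : ∀ t, 0 ≤ f t := fun t => Finset.sum_nonneg fun j _ => le_max_right _ _
  set d : ℝ → Fin n → ℝ := fun t i =>
    if x t i < 0 then -(v t i) else if x t i = 0 then max (-(v t i)) 0 else 0 with hd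
  have hle : ∀ t ∈ Ico (0:ℝ) T, 𝓝[>] t ≤ 𝓝[Icc (0:ℝ) T] t := by
    intro t ht
    apply nhdsWithin_le_of_mem
    exact mem_of_superset (Ioc_mem_nhdsGT_of_mem ⟨le_refl t, ht.2⟩)
      fun z hz => ⟨ht.1.trans hz.1.le, hz.2⟩
  have hslope : ∀ t ∈ Ico (0:ℝ) T,
      Tendsto (fun z => (z - t)⁻¹ * (f z - f t)) (𝓝[>] t) (𝓝 (∑ i, d t i)) := by
    intro t ht
    have hEq : (fun z => (z - t)⁻¹ * (f z - f t)) =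
        fun z => ∑ i, (z - t)⁻¹ * (max (-(x z i)) 0 - max (-(x t i)) 0) := by
      funext z
      rw [hf]
      rw [← Finset.sum_sub_distrib, Finset.mul_sum]
    rw [hEq]
    apply tendsto_finset_sum
    intro i _
    have hxz : Tendsto (fun z => x z i) (𝓝[>] t) (𝓝 (x t i)) :=
      (hcont i t ⟨ht.1, ht.2.le⟩).mono_left (hle t ht)
    rcases lt_trichotomy (x t i) 0 with hlt | heq | hgt
    · have hev : ∀ᶠ z in 𝓝[>] t, x z i < 0 := hxz.eventually_lt_const hlt
      have : (fun z => (z - t)⁻¹ * (max (-(x z i)) 0 - max (-(x t i)) 0)) =ᶠ[𝓝[>] t]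
          fun z => -((z - t)⁻¹ * (x z i - x t i)) := by
        filter_upwards [hev] with z hz
        rw [max_eq_left (by linarith), max_eq_left (by linarith)]
        ring
      have hlim := (hder t ht i).neg
      have hdi : d t i = -(v t i) := if_pos hlt
      rw [hdi]
      exact hlim.congr' this.symm
    · have hev : ∀ᶠ z in 𝓝[>] t, t < z := self_mem_nhdsWithin
      have : (fun z => (z - t)⁻¹ * (max (-(x z i)) 0 - max (-(x t i)) 0)) =ᶠ[𝓝[>] t]
          fun z => max (-((z - t)⁻¹ * (x z i - x t i))) 0 := by
        filter_upwards [hev] with z hz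
        have hpos : 0 < (z - t)⁻¹ := inv_pos.2 (by linarith)
        rw [heq, neg_zero, max_self, sub_zero, mul_max_of_nonneg _ _ hpos.le, mul_zero]
        congr 1
        ring
      have hlim : Tendsto (fun z => max (-((z - t)⁻¹ * (x z i - x t i))) 0) (𝓝[>] t)
          (𝓝 (max (-(v t i)) 0)) := ((hder t ht i).neg).max tendsto_const_nhds
      have hdi : d t i = max (-(v t i)) 0 := by simp [hd, heq]
      rw [hdi]
      exact hlim.congr' this.symm
    · have hev : ∀ᶠ z in 𝓝[>] t, 0 < x z i := hxz.eventually_const_lt hgt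
      have : (fun z => (z - t)⁻¹ * (max (-(x z i)) 0 - max (-(x t i)) 0)) =ᶠ[𝓝[>] t]
          fun _ => (0:ℝ) := by
        filter_upwards [hev] with z hz
        rw [max_eq_right (by linarith), max_eq_right (by linarith)]
        ring
      have hdi : d t i = 0 := by simp [hd, not_lt.2 hgt.le, hgt.ne']
      rw [hdi]
      exact tendsto_const_nhds.congr' this.symm
  have hfc : ContinuousOn f (Icc 0 T) := by
    apply continuousOn_finset_sum
    intro i _
    exact (hcont i).neg.sup continuousOn_const
  have hgron := le_gronwallBound_of_liminf_deriv_right_le (f := f)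
    (f' := fun t => ∑ i, d t i) (δ := 0) (K := n * K) (ε := 0) (a := 0) (b := T) hfc
    (fun t ht r hr => ((hslope t ht).eventually_lt_const hr).frequently)
    (by
      rw [hf]
      apply le_of_eq
      apply Finset.sum_eq_zero
      intro i _
      exact max_eq_right (by linarith [hx0 i]))
    (by
      intro t ht
      rw [add_zero]
      have hstep : ∀ i : Fin n, d t i ≤ K * f t := by
        intro i
        rcases lt_trichotomy (x t i) 0 with hlt | heq | hgt
        · rw [hd]; simp only [if_pos hlt]
          exact hbound t ht i hlt.le
        · have hdi : d t i = max (-(v t i)) 0 := by simp [hd, heq]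
          rw [hdi]
          exact max_le (hbound t ht i heq.le) (mul_nonneg hK (hfnn t))
        · have hdi : d t i = 0 := by simp [hd, not_lt.2 hgt.le, hgt.ne']
          rw [hdi]
          exact mul_nonneg hK (hfnn t)
      calc ∑ i, d t i ≤ ∑ _i : Fin n, K * f t := Finset.sum_le_sum fun i _ => hstep i
        _ = n * K * f t := by
          rw [Finset.sum_const, Finset.card_univ, Fintype.card_fin, nsmul_eq_mul]; ring)
  intro t ht i
  have h1 := hgron t ht
  rw [sub_zero, gronwallBound_ε0_δ0] at h1
  have h2 : max (-(x t i)) 0 ≤ f t := by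
    show max (-(x t i)) 0 ≤ ∑ j, max (-(x t j)) 0
    exact Finset.single_le_sum (f := fun j => max (-(x t j)) 0)
      (fun j _ => le_max_right _ _) (Finset.mem_univ i)
  have h3 : -(x t i) ≤ max (-(x t i)) 0 := le_max_left _ _
  linarith


set_option maxHeartbeats 2000000 in
/-- forward invariance of the nonnegative orthant. If `x : [0,T] → ℝ⁵` solves
`x' = F(x)` with `x(0) ∈ [0,∞)⁵` and its trajectory lies in the open set `U` on which `F`
is defined and locally Lipschitz, then `x(t) ∈ [0,∞)⁵` for all `t ∈ [0,T]`. -/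
theorem diauxic_forward_invariance
    (m1 m2 m3 κ1 κ2 κ3 lam e1 e2 k1 k2 ki q1 q2 q3 θ1 θ2 V : ℝ)
    (hm1 : 0 < m1) (hm2 : 0 < m2) (hm3 : 0 < m3)
    (hκ1 : 0 < κ1) (hκ2 : 0 < κ2) (hκ3 : 0 < κ3) (hlam : 0 < lam)
    (he1 : 0 < e1) (he2 : 0 < e2) (hk1 : 0 < k1) (hk2 : 0 < k2) (hki : 0 < ki)
    (hq1 : 0 < q1) (hq2 : 0 < q2) (hq3 : 0 < q3)
    (hθ1 : 0 < θ1) (hθ2 : 0 < θ2) (hV : 0 < V)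
    (T : ℝ) (hT : 0 ≤ T) (x : ℝ → Fin 5 → ℝ)
    (hx : ∀ t ∈ Icc (0 : ℝ) T,
      HasDerivWithinAt x (F m1 m2 m3 κ1 κ2 κ3 lam e1 e2 k1 k2 ki q1 q2 q3 θ1 θ2 V (x t))
        (Icc (0 : ℝ) T) t)
    (hxU : ∀ t ∈ Icc (0 : ℝ) T, x t ∈ U κ1 κ2 κ3 lam k1 k2 ki)
    (hx0 : ∀ i, 0 ≤ x 0 i) :
    ∀ t ∈ Icc (0 : ℝ) T, ∀ i, 0 ≤ x t i := by
  have hcontOn : ContinuousOn x (Icc 0 T) := fun t ht => (hx t ht).continuousWithinAt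
  have hcont : ∀ i : Fin 5, ContinuousOn (fun t => x t i) (Icc 0 T) :=
    fun i => (continuous_apply i).comp_continuousOn hcontOn
  obtain ⟨M, hM⟩ := isCompact_Icc.exists_bound_of_continuousOn hcontOn
  have hMi : ∀ t ∈ Icc (0:ℝ) T, ∀ i, |x t i| ≤ M := by
    intro t ht i
    calc |x t i| = ‖x t i‖ := (Real.norm_eq_abs _).symm
      _ ≤ ‖x t‖ := norm_le_pi_norm (x t) i
      _ ≤ M := hM t ht
  have h0T : (0:ℝ) ∈ Icc (0:ℝ) T := ⟨le_refl 0, hT⟩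
  have hM0 : 0 ≤ M := (abs_nonneg _).trans (hMi 0 h0T 0)
  -- lower bound on denominators
  set g : ℝ → ℝ := fun t =>
    min (min (min (κ1 + x t 2) (ki + x t 2)) (min (k2 + x t 2) (κ2 + x t 3)))
        (min (min (k1 + x t 3) (κ3 + x t 4)) (lam + x t 4)) with hg
  have hgc : ContinuousOn g (Icc 0 T) :=
    (((continuousOn_const.add (hcont 2)).inf (continuousOn_const.add (hcont 2))).inf
      ((continuousOn_const.add (hcont 2)).inf (continuousOn_const.add (hcont 3)))).inf
      (((continuousOn_const.add (hcont 3)).inf (continuousOn_const.add (hcont 4))).inf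
      (continuousOn_const.add (hcont 4)))
  obtain ⟨t0, ht0, hmin⟩ := isCompact_Icc.exists_isMinOn (nonempty_Icc.2 hT) hgc
  have hUa1 : min (min κ1 ki) k2 ≤ κ1 := le_trans (min_le_left _ _) (min_le_left _ _)
  have hUa2 : min (min κ1 ki) k2 ≤ ki := le_trans (min_le_left _ _) (min_le_right _ _)
  have hUa3 : min (min κ1 ki) k2 ≤ k2 := min_le_right _ _
  have hUb1 : min κ2 k1 ≤ κ2 := min_le_left _ _
  have hUb2 : min κ2 k1 ≤ k1 := min_le_right _ _
  have hUc1 : min κ3 lam ≤ κ3 := min_le_left _ _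
  have hUc2 : min κ3 lam ≤ lam := min_le_right _ _
  obtain ⟨hU1, hU2, hU3⟩ := hxU t0 ht0
  set c := g t0 with hcdef
  have hc0 : 0 < c := by
    rw [hcdef, hg]
    simp only [lt_min_iff]
    refine ⟨⟨⟨?_, ?_⟩, ⟨?_, ?_⟩⟩, ⟨⟨?_, ?_⟩, ?_⟩⟩ <;> linarith
  have hden : ∀ t ∈ Icc (0:ℝ) T, c ≤ κ1 + x t 2 ∧ c ≤ ki + x t 2 ∧ c ≤ k2 + x t 2 ∧
      c ≤ κ2 + x t 3 ∧ c ≤ k1 + x t 3 ∧ c ≤ κ3 + x t 4 ∧ c ≤ lam + x t 4 := by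
    intro t ht
    have h := hmin ht
    simp only [hg] at h
    simp only [le_min_iff] at h
    exact ⟨h.1.1.1, h.1.1.2, h.1.2.1, h.1.2.2, h.2.1.1, h.2.1.2, h.2.2⟩
  -- constants
  set L1 := m1 * lam / (c * c) with hL1def
  set L2 := m2 * lam / (c * c) with hL2def
  set L3 := m3 * lam / (c * c) with hL3def
  set L4 := e1 * ki / (c * c) with hL4def
  set L5 := e2 * c / (c * c) with hL5def
  have hcc : 0 ≤ c * c := mul_nonneg hc0.le hc0.le
  have hL1 : 0 ≤ L1 := div_nonneg (mul_nonneg hm1.le hlam.le) hcc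
  have hL2 : 0 ≤ L2 := div_nonneg (mul_nonneg hm2.le hlam.le) hcc
  have hL3 : 0 ≤ L3 := div_nonneg (mul_nonneg hm3.le hlam.le) hcc
  have hL4 : 0 ≤ L4 := div_nonneg (mul_nonneg he1.le hki.le) hcc
  have hL5 : 0 ≤ L5 := div_nonneg (mul_nonneg he2.le hc0.le) hcc
  set Bc := (L1 + L2 + L3 + L4 + L5) * M with hBdef
  have hB0 : 0 ≤ Bc := mul_nonneg (by linarith) hM0
  have hb1 : L1 * M ≤ Bc := by
    rw [hBdef]; linarith [mul_nonneg hL2 hM0, mul_nonneg hL3 hM0, mul_nonneg hL4 hM0,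
      mul_nonneg hL5 hM0]
  have hb2 : L2 * M ≤ Bc := by
    rw [hBdef]; linarith [mul_nonneg hL1 hM0, mul_nonneg hL3 hM0, mul_nonneg hL4 hM0,
      mul_nonneg hL5 hM0]
  have hb3 : L3 * M ≤ Bc := by
    rw [hBdef]; linarith [mul_nonneg hL2 hM0, mul_nonneg hL1 hM0, mul_nonneg hL4 hM0,
      mul_nonneg hL5 hM0]
  have hb4 : L4 * M ≤ Bc := by
    rw [hBdef]; linarith [mul_nonneg hL2 hM0, mul_nonneg hL3 hM0, mul_nonneg hL1 hM0,
      mul_nonneg hL5 hM0]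
  have hb5 : L5 * M ≤ Bc := by
    rw [hBdef]; linarith [mul_nonneg hL2 hM0, mul_nonneg hL3 hM0, mul_nonneg hL4 hM0,
      mul_nonneg hL1 hM0]
  have hq1V : 0 < q1 * V := mul_pos hq1 hV
  have hq2V : 0 < q2 * V := mul_pos hq2 hV
  have hq3V : 0 < q3 * V := mul_pos hq3 hV
  have hKnn1 : 0 ≤ Bc / (q1 * V) := div_nonneg hB0 hq1V.le
  have hKnn2 : 0 ≤ Bc / (q2 * V) := div_nonneg hB0 hq2V.le
  have hKnn3 : 0 ≤ Bc / (q3 * V) := div_nonneg hB0 hq3V.le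
  have hKnn4 : 0 ≤ 2 * (θ1 + θ2) * (Bc / V) :=
    mul_nonneg (by linarith) (div_nonneg hB0 hV.le)
  refine invariance_aux hT x
    (fun s => F m1 m2 m3 κ1 κ2 κ3 lam e1 e2 k1 k2 ki q1 q2 q3 θ1 θ2 V (x s)) hcont ?_
    (3 * Bc + Bc / (q1 * V) + Bc / (q2 * V) + Bc / (q3 * V) + 2 * (θ1 + θ2) * (Bc / V))
    (by linarith) ?_ hx0
  · -- right derivatives
    intro t ht i
    have hD := hasDerivWithinAt_pi.1 (hx t ⟨ht.1, ht.2.le⟩) i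
    rw [hasDerivWithinAt_iff_tendsto_slope] at hD
    have hle2 : 𝓝[>] t ≤ 𝓝[Icc (0:ℝ) T \ {t}] t := by
      apply nhdsWithin_le_of_mem
      exact mem_of_superset (Ioc_mem_nhdsGT_of_mem ⟨le_refl t, ht.2⟩)
        fun z hz => ⟨⟨ht.1.trans hz.1.le, hz.2⟩, hz.1.ne'⟩
    exact (hD.mono_left hle2).congr fun z => by rw [slope_def_field, div_eq_inv_mul]
  · -- the quasipositivity bound
    intro t ht i hineg
    have htI : t ∈ Icc (0:ℝ) T := ⟨ht.1, ht.2.le⟩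
    obtain ⟨hd1, hd2, hd3, hd4, hd5, hd6, hd7⟩ := hden t htI
    set P0 := max (-(x t 0)) 0 with hP0
    set P1 := max (-(x t 1)) 0 with hP1
    set P2 := max (-(x t 2)) 0 with hP2
    set P3 := max (-(x t 3)) 0 with hP3
    set P4 := max (-(x t 4)) 0 with hP4
    have hp0 : 0 ≤ P0 := le_max_right _ _
    have hp1 : 0 ≤ P1 := le_max_right _ _
    have hp2 : 0 ≤ P2 := le_max_right _ _
    have hp3 : 0 ≤ P3 := le_max_right _ _
    have hp4 : 0 ≤ P4 := le_max_right _ _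
    have hn0 : -(x t 0) ≤ P0 := le_max_left _ _
    have hn1 : -(x t 1) ≤ P1 := le_max_left _ _
    have hn2 : -(x t 2) ≤ P2 := le_max_left _ _
    have hn3 : -(x t 3) ≤ P3 := le_max_left _ _
    have hn4 : -(x t 4) ≤ P4 := le_max_left _ _
    have hxM0 : x t 0 ≤ M := (abs_le.1 (hMi t htI 0)).2
    have hxM1 : x t 1 ≤ M := (abs_le.1 (hMi t htI 1)).2
    have hxM2 : x t 2 ≤ M := (abs_le.1 (hMi t htI 2)).2
    have hxM3 : x t 3 ≤ M := (abs_le.1 (hMi t htI 3)).2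
    have hxM4 : x t 4 ≤ M := (abs_le.1 (hMi t htI 4)).2
    have hxm0 : -(x t 0) ≤ M := by linarith [(abs_le.1 (hMi t htI 0)).1]
    have hxm1 : -(x t 1) ≤ M := by linarith [(abs_le.1 (hMi t htI 1)).1]
    have hxm2 : -(x t 2) ≤ M := by linarith [(abs_le.1 (hMi t htI 2)).1]
    have hxm3 : -(x t 3) ≤ M := by linarith [(abs_le.1 (hMi t htI 3)).1]
    have hxm4 : -(x t 4) ≤ M := by linarith [(abs_le.1 (hMi t htI 4)).1]
    have hpd1 : 0 < κ1 + x t 2 := lt_of_lt_of_le hc0 hd1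
    have hpd4 : 0 < κ2 + x t 3 := lt_of_lt_of_le hc0 hd4
    have hpd6 : 0 < κ3 + x t 4 := lt_of_lt_of_le hc0 hd6
    have hpd7 : 0 < lam + x t 4 := lt_of_lt_of_le hc0 hd7
    -- rate bounds
    have h1a : -(mu m1 κ1 lam (x t 2) (x t 4)) ≤ L1 * P2 :=
      rate_neg_bound m1 lam c (κ1 + x t 2) (lam + x t 4) (x t 2) P2 hm1 hlam hc0 hd1 hd7 hp2 hn2
    have h1b : mu m1 κ1 lam (x t 2) (x t 4) ≤ L1 * M :=
      rate_pos_bound m1 lam c (κ1 + x t 2) (lam + x t 4) (x t 2) M hm1 hlam hc0 hd1 hd7 hM0 hxM2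
    have h1c : -(mu m1 κ1 lam (x t 2) (x t 4)) ≤ L1 * M :=
      rate_neg_bound m1 lam c (κ1 + x t 2) (lam + x t 4) (x t 2) M hm1 hlam hc0 hd1 hd7 hM0 hxm2
    have h2a : -(mu m2 κ2 lam (x t 3) (x t 4)) ≤ L2 * P3 :=
      rate_neg_bound m2 lam c (κ2 + x t 3) (lam + x t 4) (x t 3) P3 hm2 hlam hc0 hd4 hd7 hp3 hn3
    have h2b : mu m2 κ2 lam (x t 3) (x t 4) ≤ L2 * M :=
      rate_pos_bound m2 lam c (κ2 + x t 3) (lam + x t 4) (x t 3) M hm2 hlam hc0 hd4 hd7 hM0 hxM3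
    have h2c : -(mu m2 κ2 lam (x t 3) (x t 4)) ≤ L2 * M :=
      rate_neg_bound m2 lam c (κ2 + x t 3) (lam + x t 4) (x t 3) M hm2 hlam hc0 hd4 hd7 hM0 hxm3
    have h3b : mu3 m3 κ3 lam (x t 4) ≤ L3 * M :=
      rate_pos_bound m3 lam c (κ3 + x t 4) (lam + x t 4) (x t 4) M hm3 hlam hc0 hd6 hd7 hM0 hxM4
    have h3c : -(mu3 m3 κ3 lam (x t 4)) ≤ L3 * M :=
      rate_neg_bound m3 lam c (κ3 + x t 4) (lam + x t 4) (x t 4) M hm3 hlam hc0 hd6 hd7 hM0 hxm4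
    have h4a : -(eta1 e1 k1 ki (x t 2) (x t 3)) ≤ L4 * P3 :=
      rate_neg_bound e1 ki c (k1 + x t 3) (ki + x t 2) (x t 3) P3 he1 hki hc0 hd5 hd2 hp3 hn3
    have h4b : eta1 e1 k1 ki (x t 2) (x t 3) ≤ L4 * M :=
      rate_pos_bound e1 ki c (k1 + x t 3) (ki + x t 2) (x t 3) M he1 hki hc0 hd5 hd2 hM0 hxM3
    have h4c : -(eta1 e1 k1 ki (x t 2) (x t 3)) ≤ L4 * M :=
      rate_neg_bound e1 ki c (k1 + x t 3) (ki + x t 2) (x t 3) M he1 hki hc0 hd5 hd2 hM0 hxm3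
    have h5a : -(eta2 e2 k2 (x t 2)) ≤ L5 * P2 := by
      have h := rate_neg_bound e2 c c (k2 + x t 2) c (x t 2) P2 he2 hc0 hc0 hd3 le_rfl hp2 hn2
      rw [div_self hc0.ne', mul_one] at h
      exact h
    have h5b : eta2 e2 k2 (x t 2) ≤ L5 * M := by
      have h := rate_pos_bound e2 c c (k2 + x t 2) c (x t 2) M he2 hc0 hc0 hd3 le_rfl hM0 hxM2
      rw [div_self hc0.ne', mul_one] at h
      exact h
    -- sign facts
    have hs1 : x t 2 ≤ 0 → mu m1 κ1 lam (x t 2) (x t 4) ≤ 0 := fun h =>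
      rate_nonpos m1 lam (κ1 + x t 2) (lam + x t 4) (x t 2) hm1.le hlam.le hpd1 hpd7 h
    have hs2 : x t 3 ≤ 0 → mu m2 κ2 lam (x t 3) (x t 4) ≤ 0 := fun h =>
      rate_nonpos m2 lam (κ2 + x t 3) (lam + x t 4) (x t 3) hm2.le hlam.le hpd4 hpd7 h
    have hs3 : x t 4 ≤ 0 → mu3 m3 κ3 lam (x t 4) ≤ 0 := fun h =>
      rate_nonpos m3 lam (κ3 + x t 4) (lam + x t 4) (x t 4) hm3.le hlam.le hpd6 hpd7 h
    have hS0 : 0 ≤ P0 + P1 + P2 + P3 + P4 := by linarith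
    have nnB0 : 0 ≤ Bc * P0 := mul_nonneg hB0 hp0
    have nnB1 : 0 ≤ Bc * P1 := mul_nonneg hB0 hp1
    have nnB2 : 0 ≤ Bc * P2 := mul_nonneg hB0 hp2
    have nnB3 : 0 ≤ Bc * P3 := mul_nonneg hB0 hp3
    have nnB4 : 0 ≤ Bc * P4 := mul_nonneg hB0 hp4
    fin_cases i <;>
      simp only [F, bdiv, Matrix.cons_val_zero, Matrix.cons_val_one, Matrix.head_cons,
        Matrix.cons_val_two, Matrix.tail_cons, Matrix.cons_val_three, Matrix.cons_val_four] <;>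
      rw [Fin.sum_univ_five, ← hP0, ← hP1, ← hP2, ← hP3, ← hP4]
    · -- coordinate 0
      have hineg' : x t 0 ≤ 0 := hineg
      have hP0e : x t 0 = -P0 := by
        rw [hP0, max_eq_left (neg_nonneg.2 hineg')]; ring
      rw [hP0e]
      have c1 : mu m1 κ1 lam (x t 2) (x t 4) + mu3 m3 κ3 lam (x t 4)
          - eta1 e1 k1 ki (x t 2) (x t 3) ≤ L1 * M + L3 * M + L4 * M := by linarith
      have c2 := mul_le_mul_of_nonneg_right c1 hp0
      have c3 : -(eta2 e2 k2 (x t 2) * x t 1) ≤ (L5 * P2) * M + (L5 * M) * P1 :=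
        cross_bound _ _ _ _ _ _ h5a h5b hn1 hxM1 (mul_nonneg hL5 hp2)
          (mul_nonneg hL5 hM0) hp1 hM0
      have c4 : L1 * M + L3 * M + L4 * M ≤ 3 * Bc := by linarith
      have c5 := mul_le_mul_of_nonneg_right c4 hp0
      have m5a := mul_le_mul_of_nonneg_right hb5 hp2
      have m5b := mul_le_mul_of_nonneg_right hb5 hp1
      have key : -((mu m1 κ1 lam (x t 2) (x t 4) + mu3 m3 κ3 lam (x t 4)
          - eta1 e1 k1 ki (x t 2) (x t 3)) * -P0 + eta2 e2 k2 (x t 2) * x t 1) ≤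
          3 * Bc * (P0 + P1 + P2 + P3 + P4) := by linarith [c2, c3, c5, m5a, m5b]
      calc -((mu m1 κ1 lam (x t 2) (x t 4) + mu3 m3 κ3 lam (x t 4)
          - eta1 e1 k1 ki (x t 2) (x t 3)) * -P0 + eta2 e2 k2 (x t 2) * x t 1)
          ≤ 3 * Bc * (P0 + P1 + P2 + P3 + P4) := key
        _ ≤ (3 * Bc + Bc / (q1 * V) + Bc / (q2 * V) + Bc / (q3 * V)
            + 2 * (θ1 + θ2) * (Bc / V)) * (P0 + P1 + P2 + P3 + P4) :=
          mul_le_mul_of_nonneg_right (by linarith) hS0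
    · -- coordinate 1
      have hineg' : x t 1 ≤ 0 := hineg
      have hP1e : x t 1 = -P1 := by
        rw [hP1, max_eq_left (neg_nonneg.2 hineg')]; ring
      rw [hP1e]
      have c1 : mu m2 κ2 lam (x t 3) (x t 4) + mu3 m3 κ3 lam (x t 4)
          - eta2 e2 k2 (x t 2) ≤ L2 * M + L3 * M + L5 * M := by
        have h5c : -(eta2 e2 k2 (x t 2)) ≤ L5 * M := by
          have hPM2 : P2 ≤ M := max_le hxm2 hM0
          have := mul_le_mul_of_nonneg_left hPM2 hL5
          linarith [h5a]
        linarith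
      have c2 := mul_le_mul_of_nonneg_right c1 hp1
      have c3 : -(eta1 e1 k1 ki (x t 2) (x t 3) * x t 0) ≤ (L4 * P3) * M + (L4 * M) * P0 :=
        cross_bound _ _ _ _ _ _ h4a h4b hn0 hxM0 (mul_nonneg hL4 hp3)
          (mul_nonneg hL4 hM0) hp0 hM0
      have c4 : L2 * M + L3 * M + L5 * M ≤ 3 * Bc := by linarith
      have c5 := mul_le_mul_of_nonneg_right c4 hp1
      have m4a := mul_le_mul_of_nonneg_right hb4 hp3
      have m4b := mul_le_mul_of_nonneg_right hb4 hp0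
      have key : -((mu m2 κ2 lam (x t 3) (x t 4) + mu3 m3 κ3 lam (x t 4)
          - eta2 e2 k2 (x t 2)) * -P1 + eta1 e1 k1 ki (x t 2) (x t 3) * x t 0) ≤
          3 * Bc * (P0 + P1 + P2 + P3 + P4) := by linarith [c2, c3, c5, m4a, m4b]
      calc -((mu m2 κ2 lam (x t 3) (x t 4) + mu3 m3 κ3 lam (x t 4)
          - eta2 e2 k2 (x t 2)) * -P1 + eta1 e1 k1 ki (x t 2) (x t 3) * x t 0)
          ≤ 3 * Bc * (P0 + P1 + P2 + P3 + P4) := key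
        _ ≤ (3 * Bc + Bc / (q1 * V) + Bc / (q2 * V) + Bc / (q3 * V)
            + 2 * (θ1 + θ2) * (Bc / V)) * (P0 + P1 + P2 + P3 + P4) :=
          mul_le_mul_of_nonneg_right (by linarith) hS0
    · -- coordinate 2
      have hineg' : x t 2 ≤ 0 := hineg
      have pr : mu m1 κ1 lam (x t 2) (x t 4) * x t 0 ≤ (L1 * M) * P0 :=
        prod_bound _ _ _ _ (hs1 hineg') h1c hn0 hp0 (mul_nonneg hL1 hM0)
      have pr2 : (L1 * M) * P0 ≤ Bc * (P0 + P1 + P2 + P3 + P4) := by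
        linarith [mul_le_mul_of_nonneg_right hb1 hp0]
      calc -(-(mu m1 κ1 lam (x t 2) (x t 4) * x t 0) / (q1 * V))
          = (mu m1 κ1 lam (x t 2) (x t 4) * x t 0) / (q1 * V) := by ring
        _ ≤ (Bc * (P0 + P1 + P2 + P3 + P4)) / (q1 * V) :=
          div_mono_pos (le_trans pr pr2) hq1V
        _ = (Bc / (q1 * V)) * (P0 + P1 + P2 + P3 + P4) := by ring
        _ ≤ (3 * Bc + Bc / (q1 * V) + Bc / (q2 * V) + Bc / (q3 * V)
            + 2 * (θ1 + θ2) * (Bc / V)) * (P0 + P1 + P2 + P3 + P4) :=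
          mul_le_mul_of_nonneg_right (by linarith) hS0
    · -- coordinate 3
      have hineg' : x t 3 ≤ 0 := hineg
      have pr : mu m2 κ2 lam (x t 3) (x t 4) * x t 1 ≤ (L2 * M) * P1 :=
        prod_bound _ _ _ _ (hs2 hineg') h2c hn1 hp1 (mul_nonneg hL2 hM0)
      have pr2 : (L2 * M) * P1 ≤ Bc * (P0 + P1 + P2 + P3 + P4) := by
        linarith [mul_le_mul_of_nonneg_right hb2 hp1]
      calc -(-(mu m2 κ2 lam (x t 3) (x t 4) * x t 1) / (q2 * V))
          = (mu m2 κ2 lam (x t 3) (x t 4) * x t 1) / (q2 * V) := by ring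
        _ ≤ (Bc * (P0 + P1 + P2 + P3 + P4)) / (q2 * V) :=
          div_mono_pos (le_trans pr pr2) hq2V
        _ = (Bc / (q2 * V)) * (P0 + P1 + P2 + P3 + P4) := by ring
        _ ≤ (3 * Bc + Bc / (q1 * V) + Bc / (q2 * V) + Bc / (q3 * V)
            + 2 * (θ1 + θ2) * (Bc / V)) * (P0 + P1 + P2 + P3 + P4) :=
          mul_le_mul_of_nonneg_right (by linarith) hS0
    · -- coordinate 4
      have hineg' : x t 4 ≤ 0 := hineg
      have t1 : mu3 m3 κ3 lam (x t 4) * (x t 0 + x t 1) ≤ (L3 * M) * (P0 + P1) :=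
        prod_bound _ _ _ _ (hs3 hineg') h3c (by linarith) (by linarith)
          (mul_nonneg hL3 hM0)
      have t2 : -(mu m1 κ1 lam (x t 2) (x t 4) * x t 0) ≤ (L1 * P2) * M + (L1 * M) * P0 :=
        cross_bound _ _ _ _ _ _ h1a h1b hn0 hxM0 (mul_nonneg hL1 hp2)
          (mul_nonneg hL1 hM0) hp0 hM0
      have t3 : -(mu m2 κ2 lam (x t 3) (x t 4) * x t 1) ≤ (L2 * P3) * M + (L2 * M) * P1 :=
        cross_bound _ _ _ _ _ _ h2a h2b hn1 hxM1 (mul_nonneg hL2 hp3)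
          (mul_nonneg hL2 hM0) hp1 hM0
      have n2 : -(θ1 * mu m1 κ1 lam (x t 2) (x t 4) * x t 0
          + θ2 * mu m2 κ2 lam (x t 3) (x t 4) * x t 1) ≤
          2 * (θ1 + θ2) * (Bc * (P0 + P1 + P2 + P3 + P4)) := by
        linarith [mul_le_mul_of_nonneg_left t2 hθ1.le, mul_le_mul_of_nonneg_left t3 hθ2.le,
          mul_le_mul_of_nonneg_left (mul_le_mul_of_nonneg_right hb1 hp2) hθ1.le,
          mul_le_mul_of_nonneg_left (mul_le_mul_of_nonneg_right hb1 hp0) hθ1.le,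
          mul_le_mul_of_nonneg_left (mul_le_mul_of_nonneg_right hb2 hp3) hθ2.le,
          mul_le_mul_of_nonneg_left (mul_le_mul_of_nonneg_right hb2 hp1) hθ2.le,
          mul_nonneg (mul_nonneg hθ1.le hB0) hp0, mul_nonneg (mul_nonneg hθ1.le hB0) hp1,
          mul_nonneg (mul_nonneg hθ1.le hB0) hp2, mul_nonneg (mul_nonneg hθ1.le hB0) hp3,
          mul_nonneg (mul_nonneg hθ1.le hB0) hp4, mul_nonneg (mul_nonneg hθ2.le hB0) hp0,
          mul_nonneg (mul_nonneg hθ2.le hB0) hp1, mul_nonneg (mul_nonneg hθ2.le hB0) hp2,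
          mul_nonneg (mul_nonneg hθ2.le hB0) hp3, mul_nonneg (mul_nonneg hθ2.le hB0) hp4]
      have t1' : (L3 * M) * (P0 + P1) ≤ Bc * (P0 + P1 + P2 + P3 + P4) := by
        linarith [mul_le_mul_of_nonneg_right hb3 hp0, mul_le_mul_of_nonneg_right hb3 hp1]
      calc -(-(mu3 m3 κ3 lam (x t 4) * (x t 0 + x t 1)) / (q3 * V)
            + (θ1 * mu m1 κ1 lam (x t 2) (x t 4) * x t 0
              + θ2 * mu m2 κ2 lam (x t 3) (x t 4) * x t 1) / V)
          = (mu3 m3 κ3 lam (x t 4) * (x t 0 + x t 1)) / (q3 * V)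
            + (-(θ1 * mu m1 κ1 lam (x t 2) (x t 4) * x t 0
              + θ2 * mu m2 κ2 lam (x t 3) (x t 4) * x t 1)) / V := by ring
        _ ≤ (Bc * (P0 + P1 + P2 + P3 + P4)) / (q3 * V)
            + (2 * (θ1 + θ2) * (Bc * (P0 + P1 + P2 + P3 + P4))) / V :=
          add_le_add (div_mono_pos (le_trans t1 t1') hq3V) (div_mono_pos n2 hV)
        _ = (Bc / (q3 * V) + 2 * (θ1 + θ2) * (Bc / V)) * (P0 + P1 + P2 + P3 + P4) := by
          ring
        _ ≤ (3 * Bc + Bc / (q1 * V) + Bc / (q2 * V) + Bc / (q3 * V)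
            + 2 * (θ1 + θ2) * (Bc / V)) * (P0 + P1 + P2 + P3 + P4) :=
          mul_le_mul_of_nonneg_right (by linarith) hS0
end

section
/- Conservation law: along any solution x(t) = (n1(t),n2(t),r1(t),r2(t),a(t)) of the diauxic-growth ODE x' = F(x) taking values in [0,∞)⁵, the quantity M(t) = n1(t) + n2(t) + V·[q1(1+θ1 q3) r1(t) + q2(1+θ2 q3) r2(t) + q3 a(t)] is constant in t. -/
open Set

/-- conservation law. Along any solution `(n1,n2,r1,r2,a)` of the
diauxic-growth ODE taking values in `[0,∞)⁵`, the quantity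
`M(t) = n1(t) + n2(t) + V·[q1(1+θ1q3)r1(t) + q2(1+θ2q3)r2(t) + q3·a(t)]` is constant. -/
theorem diauxic_conservation_law
    (m1 m2 m3 κ1 κ2 κ3 lam e1 e2 k1 k2 ki q1 q2 q3 θ1 θ2 V : ℝ)
    (hm1 : 0 < m1) (hm2 : 0 < m2) (hm3 : 0 < m3)
    (hκ1 : 0 < κ1) (hκ2 : 0 < κ2) (hκ3 : 0 < κ3) (hlam : 0 < lam)
    (he1 : 0 < e1) (he2 : 0 < e2) (hk1 : 0 < k1) (hk2 : 0 < k2) (hki : 0 < ki)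
    (hq1 : 0 < q1) (hq2 : 0 < q2) (hq3 : 0 < q3)
    (hθ1 : 0 < θ1) (hθ2 : 0 < θ2) (hV : 0 < V)
    (n1 n2 r1 r2 a : ℝ → ℝ)
    (hn1 : ∀ t ∈ (Ici (0 : ℝ)), HasDerivWithinAt n1
      ((bdiv m1 κ1 m3 κ3 lam (r1 t) (a t) - eta1 e1 k1 ki (r1 t) (r2 t)) * n1 t
        + eta2 e2 k2 (r1 t) * n2 t) (Ici (0 : ℝ)) t)
    (hn2 : ∀ t ∈ (Ici (0 : ℝ)), HasDerivWithinAt n2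
      ((bdiv m2 κ2 m3 κ3 lam (r2 t) (a t) - eta2 e2 k2 (r1 t)) * n2 t
        + eta1 e1 k1 ki (r1 t) (r2 t) * n1 t) (Ici (0 : ℝ)) t)
    (hr1 : ∀ t ∈ (Ici (0 : ℝ)), HasDerivWithinAt r1
      (-(mu m1 κ1 lam (r1 t) (a t) * n1 t) / (q1 * V)) (Ici (0 : ℝ)) t)
    (hr2 : ∀ t ∈ (Ici (0 : ℝ)), HasDerivWithinAt r2
      (-(mu m2 κ2 lam (r2 t) (a t) * n2 t) / (q2 * V)) (Ici (0 : ℝ)) t)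
    (ha : ∀ t ∈ (Ici (0 : ℝ)), HasDerivWithinAt a
      (-(mu3 m3 κ3 lam (a t) * (n1 t + n2 t)) / (q3 * V)
        + (θ1 * mu m1 κ1 lam (r1 t) (a t) * n1 t
            + θ2 * mu m2 κ2 lam (r2 t) (a t) * n2 t) / V) (Ici (0 : ℝ)) t)
    (hpos : ∀ t ∈ (Ici (0 : ℝ)), 0 ≤ n1 t ∧ 0 ≤ n2 t ∧ 0 ≤ r1 t ∧ 0 ≤ r2 t ∧ 0 ≤ a t)
    :
    ∀ t ∈ Ici (0 : ℝ),
      n1 t + n2 t + V * (q1 * (1 + θ1 * q3) * r1 t + q2 * (1 + θ2 * q3) * r2 t + q3 * a t)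
      = n1 0 + n2 0
          + V * (q1 * (1 + θ1 * q3) * r1 0 + q2 * (1 + θ2 * q3) * r2 0 + q3 * a 0) := by
  set M : ℝ → ℝ := fun s =>
    n1 s + n2 s + V * (q1 * (1 + θ1 * q3) * r1 s + q2 * (1 + θ2 * q3) * r2 s + q3 * a s)
    with hM
  have hderiv : ∀ s ∈ Ici (0 : ℝ), HasDerivWithinAt M 0 (Ici (0 : ℝ)) s := by
    intro s hs
    have h := ((hn1 s hs).add (hn2 s hs)).add
      (((((hr1 s hs).const_mul (q1 * (1 + θ1 * q3))).add
        ((hr2 s hs).const_mul (q2 * (1 + θ2 * q3)))).add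
        ((ha s hs).const_mul q3)).const_mul V)
    convert h using 1
    · rfl
    · rfl
    · rfl
    simp only [bdiv]
    field_simp
    ring
  intro t ht
  have hcont : ContinuousOn M (Icc (0 : ℝ) t) := fun s hs =>
    ((hderiv s (Icc_subset_Ici_self hs)).continuousWithinAt).mono Icc_subset_Ici_self
  have hd : ∀ x ∈ Ico (0 : ℝ) t, HasDerivWithinAt M 0 (Ici x) x := fun x hx =>
    (hderiv x hx.1).mono (Ici_subset_Ici.mpr hx.1)
  exact constant_of_has_deriv_right_zero hcont hd t (right_mem_Icc.mpr ht)
end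

section
/- Long-time limits: along any global solution (n1(t),n2(t),r1(t),r2(t),a(t)) of the diauxic-growth ODE on [0,∞) taking values in [0,∞)⁵, the limits lim_{t→∞} r1(t), lim_{t→∞} r2(t) and lim_{t→∞} (n1(t)+n2(t)) all exist (in ℝ). -/
open Set

lemma tendsto_of_antitoneOn_bddBelow {f : ℝ → ℝ} {c : ℝ}
    (hf : AntitoneOn f (Ici 0)) (hb : ∀ t ∈ Ici (0:ℝ), c ≤ f t) :
    ∃ l, Filter.Tendsto f Filter.atTop (nhds l) := by
  set g : ℝ → ℝ := fun t => f (max t 0) with hg_def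
  have hg : Antitone g := fun s t hst =>
    hf (le_max_right s 0) (le_max_right t 0) (max_le_max hst le_rfl)
  have hbdd : BddBelow (Set.range g) := ⟨c, by rintro _ ⟨t, rfl⟩; exact hb _ (le_max_right t 0)⟩
  refine ⟨_, (tendsto_atTop_ciInf hg hbdd).congr' ?_⟩
  filter_upwards [Filter.eventually_ge_atTop (0:ℝ)] with t ht
  simp [hg_def, max_eq_left ht]

lemma tendsto_of_monotoneOn_bddAbove {f : ℝ → ℝ} {c : ℝ}
    (hf : MonotoneOn f (Ici 0)) (hb : ∀ t ∈ Ici (0:ℝ), f t ≤ c) :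
    ∃ l, Filter.Tendsto f Filter.atTop (nhds l) := by
  set g : ℝ → ℝ := fun t => f (max t 0) with hg_def
  have hg : Monotone g := fun s t hst =>
    hf (le_max_right s 0) (le_max_right t 0) (max_le_max hst le_rfl)
  have hbdd : BddAbove (Set.range g) := ⟨c, by rintro _ ⟨t, rfl⟩; exact hb _ (le_max_right t 0)⟩
  refine ⟨_, (tendsto_atTop_ciSup hg hbdd).congr' ?_⟩
  filter_upwards [Filter.eventually_ge_atTop (0:ℝ)] with t ht
  simp [hg_def, max_eq_left ht]

/-- long-time limits. Along any global solution of the diauxic-growth ODE on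
`[0,∞)` taking values in `[0,∞)⁵`, the limits `lim_{t→∞} r1(t)`, `lim_{t→∞} r2(t)` and
`lim_{t→∞} (n1(t)+n2(t))` all exist in `ℝ`. -/
theorem diauxic_long_time_limits
    (m1 m2 m3 κ1 κ2 κ3 lam e1 e2 k1 k2 ki q1 q2 q3 θ1 θ2 V : ℝ)
    (hm1 : 0 < m1) (hm2 : 0 < m2) (hm3 : 0 < m3)
    (hκ1 : 0 < κ1) (hκ2 : 0 < κ2) (hκ3 : 0 < κ3) (hlam : 0 < lam)
    (he1 : 0 < e1) (he2 : 0 < e2) (hk1 : 0 < k1) (hk2 : 0 < k2) (hki : 0 < ki)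
    (hq1 : 0 < q1) (hq2 : 0 < q2) (hq3 : 0 < q3)
    (hθ1 : 0 < θ1) (hθ2 : 0 < θ2) (hV : 0 < V)
    (n1 n2 r1 r2 a : ℝ → ℝ)
    (hn1 : ∀ t ∈ (Ici (0 : ℝ)), HasDerivWithinAt n1
      ((bdiv m1 κ1 m3 κ3 lam (r1 t) (a t) - eta1 e1 k1 ki (r1 t) (r2 t)) * n1 t
        + eta2 e2 k2 (r1 t) * n2 t) (Ici (0 : ℝ)) t)
    (hn2 : ∀ t ∈ (Ici (0 : ℝ)), HasDerivWithinAt n2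
      ((bdiv m2 κ2 m3 κ3 lam (r2 t) (a t) - eta2 e2 k2 (r1 t)) * n2 t
        + eta1 e1 k1 ki (r1 t) (r2 t) * n1 t) (Ici (0 : ℝ)) t)
    (hr1 : ∀ t ∈ (Ici (0 : ℝ)), HasDerivWithinAt r1
      (-(mu m1 κ1 lam (r1 t) (a t) * n1 t) / (q1 * V)) (Ici (0 : ℝ)) t)
    (hr2 : ∀ t ∈ (Ici (0 : ℝ)), HasDerivWithinAt r2
      (-(mu m2 κ2 lam (r2 t) (a t) * n2 t) / (q2 * V)) (Ici (0 : ℝ)) t)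
    (ha : ∀ t ∈ (Ici (0 : ℝ)), HasDerivWithinAt a
      (-(mu3 m3 κ3 lam (a t) * (n1 t + n2 t)) / (q3 * V)
        + (θ1 * mu m1 κ1 lam (r1 t) (a t) * n1 t
            + θ2 * mu m2 κ2 lam (r2 t) (a t) * n2 t) / V) (Ici (0 : ℝ)) t)
    (hpos : ∀ t ∈ (Ici (0 : ℝ)), 0 ≤ n1 t ∧ 0 ≤ n2 t ∧ 0 ≤ r1 t ∧ 0 ≤ r2 t ∧ 0 ≤ a t)
    :
    (∃ l1 : ℝ, Filter.Tendsto r1 Filter.atTop (nhds l1)) ∧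
    (∃ l2 : ℝ, Filter.Tendsto r2 Filter.atTop (nhds l2)) ∧
    (∃ l3 : ℝ, Filter.Tendsto (fun t => n1 t + n2 t) Filter.atTop (nhds l3)) := by
  -- nonnegativity of the rates along the trajectory
  have hmu1 : ∀ t ∈ Ici (0:ℝ), 0 ≤ mu m1 κ1 lam (r1 t) (a t) := by
    intro t ht
    obtain ⟨h1, h2, h3, h4, h5⟩ := hpos t ht
    unfold mu
    have hd1 : (0:ℝ) < κ1 + r1 t := by linarith
    have hd2 : (0:ℝ) < lam + a t := by linarith
    exact mul_nonneg (mul_nonneg hm1.le (div_nonneg h3 hd1.le)) (div_nonneg hlam.le hd2.le)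
  have hmu2 : ∀ t ∈ Ici (0:ℝ), 0 ≤ mu m2 κ2 lam (r2 t) (a t) := by
    intro t ht
    obtain ⟨h1, h2, h3, h4, h5⟩ := hpos t ht
    unfold mu
    have hd1 : (0:ℝ) < κ2 + r2 t := by linarith
    have hd2 : (0:ℝ) < lam + a t := by linarith
    exact mul_nonneg (mul_nonneg hm2.le (div_nonneg h4 hd1.le)) (div_nonneg hlam.le hd2.le)
  have hmu3 : ∀ t ∈ Ici (0:ℝ), 0 ≤ mu3 m3 κ3 lam (a t) := by
    intro t ht
    obtain ⟨h1, h2, h3, h4, h5⟩ := hpos t ht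
    unfold mu3
    have hd1 : (0:ℝ) < κ3 + a t := by linarith
    have hd2 : (0:ℝ) < lam + a t := by linarith
    exact mul_nonneg (mul_nonneg hm3.le (div_nonneg h5 hd1.le)) (div_nonneg hlam.le hd2.le)
  -- r1 is antitone on [0,∞)
  have hanti1 : AntitoneOn r1 (Ici (0:ℝ)) := by
    apply antitoneOn_of_hasDerivWithinAt_nonpos (convex_Ici 0)
      (f' := fun t => -(mu m1 κ1 lam (r1 t) (a t) * n1 t) / (q1 * V))
      (fun t ht => (hr1 t ht).continuousWithinAt)
      (fun t ht => ((hr1 t (interior_subset ht)).mono interior_subset))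
    intro t ht
    have ht' : t ∈ Ici (0:ℝ) := interior_subset ht
    apply div_nonpos_of_nonpos_of_nonneg
    · have := mul_nonneg (hmu1 t ht') (hpos t ht').1
      linarith
    · positivity
  have hanti2 : AntitoneOn r2 (Ici (0:ℝ)) := by
    apply antitoneOn_of_hasDerivWithinAt_nonpos (convex_Ici 0)
      (f' := fun t => -(mu m2 κ2 lam (r2 t) (a t) * n2 t) / (q2 * V))
      (fun t ht => (hr2 t ht).continuousWithinAt)
      (fun t ht => ((hr2 t (interior_subset ht)).mono interior_subset))
    intro t ht
    have ht' : t ∈ Ici (0:ℝ) := interior_subset ht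
    apply div_nonpos_of_nonpos_of_nonneg
    · have := mul_nonneg (hmu2 t ht') (hpos t ht').2.1
      linarith
    · positivity
  -- derivative of n1 + n2
  have hN : ∀ t ∈ Ici (0:ℝ), HasDerivWithinAt (fun t => n1 t + n2 t)
      (bdiv m1 κ1 m3 κ3 lam (r1 t) (a t) * n1 t + bdiv m2 κ2 m3 κ3 lam (r2 t) (a t) * n2 t)
      (Ici (0:ℝ)) t := by
    intro t ht
    have h := (hn1 t ht).add (hn2 t ht)
    refine h.congr_deriv ?_
    symm
    ring
  have hNmono : MonotoneOn (fun t => n1 t + n2 t) (Ici (0:ℝ)) := by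
    apply monotoneOn_of_hasDerivWithinAt_nonneg (convex_Ici 0)
      (f' := fun t => bdiv m1 κ1 m3 κ3 lam (r1 t) (a t) * n1 t
        + bdiv m2 κ2 m3 κ3 lam (r2 t) (a t) * n2 t)
      (fun t ht => (hN t ht).continuousWithinAt)
      (fun t ht => ((hN t (interior_subset ht)).mono interior_subset))
    intro t ht
    have ht' : t ∈ Ici (0:ℝ) := interior_subset ht
    obtain ⟨h1, h2, h3, h4, h5⟩ := hpos t ht'
    have hb1 : 0 ≤ bdiv m1 κ1 m3 κ3 lam (r1 t) (a t) :=
      add_nonneg (hmu1 t ht') (hmu3 t ht')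
    have hb2 : 0 ≤ bdiv m2 κ2 m3 κ3 lam (r2 t) (a t) :=
      add_nonneg (hmu2 t ht') (hmu3 t ht')
    exact add_nonneg (mul_nonneg hb1 h1) (mul_nonneg hb2 h2)
  -- the conserved quantity
  set c1 : ℝ := q1 * V * (1 + q3 * θ1) with hc1_def
  set c2 : ℝ := q2 * V * (1 + q3 * θ2) with hc2_def
  set c3 : ℝ := q3 * V with hc3_def
  have hc1 : 0 < c1 := by rw [hc1_def]; positivity
  have hc2 : 0 < c2 := by rw [hc2_def]; positivity
  have hc3 : 0 < c3 := by rw [hc3_def]; positivity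
  set M : ℝ → ℝ := fun t => (n1 t + n2 t) + c1 * r1 t + c2 * r2 t + c3 * a t with hM_def
  have hM : ∀ t ∈ Ici (0:ℝ), HasDerivWithinAt M 0 (Ici (0:ℝ)) t := by
    intro t ht
    have h := (((hN t ht).add ((hr1 t ht).const_mul c1)).add
      ((hr2 t ht).const_mul c2)).add ((ha t ht).const_mul c3)
    refine h.congr_deriv ?_
    symm
    unfold bdiv
    rw [hc1_def, hc2_def, hc3_def]
    field_simp
    ring
  have hMmono : MonotoneOn M (Ici (0:ℝ)) := by
    apply monotoneOn_of_hasDerivWithinAt_nonneg (convex_Ici 0) (f' := fun _ => (0:ℝ))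
      (fun t ht => (hM t ht).continuousWithinAt)
      (fun t ht => ((hM t (interior_subset ht)).mono interior_subset))
    intro t _; exact le_refl 0
  have hManti : AntitoneOn M (Ici (0:ℝ)) := by
    apply antitoneOn_of_hasDerivWithinAt_nonpos (convex_Ici 0) (f' := fun _ => (0:ℝ))
      (fun t ht => (hM t ht).continuousWithinAt)
      (fun t ht => ((hM t (interior_subset ht)).mono interior_subset))
    intro t _; exact le_refl 0
  have hMconst : ∀ t ∈ Ici (0:ℝ), M t = M 0 := by
    intro t ht
    exact le_antisymm (hManti (self_mem_Ici) ht ht) (hMmono (self_mem_Ici) ht ht)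
  -- n1 + n2 bounded above by M 0
  have hNbdd : ∀ t ∈ Ici (0:ℝ), n1 t + n2 t ≤ M 0 := by
    intro t ht
    obtain ⟨h1, h2, h3, h4, h5⟩ := hpos t ht
    have hle : n1 t + n2 t ≤ M t := by
      simp only [hM_def]
      nlinarith [mul_nonneg hc1.le h3, mul_nonneg hc2.le h4, mul_nonneg hc3.le h5]
    exact (hMconst t ht) ▸ hle
  refine ⟨?_, ?_, ?_⟩
  · exact tendsto_of_antitoneOn_bddBelow hanti1 (fun t ht => (hpos t ht).2.2.1)
  · exact tendsto_of_antitoneOn_bddBelow hanti2 (fun t ht => (hpos t ht).2.2.2.1)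
  · exact tendsto_of_monotoneOn_bddAbove hNmono hNbdd
end
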